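/- arXiv:2207.12906 — 3 statements merged into one kernel-verified Lean document; each statement's English description precedes it below -/
import Mathlib

section
/- If N is the smallest odd weird number — i.e., N is odd and weird, and no odd positive integer m < N is weird — then N is a primitive abundant number, i.e., N is abundant and no proper divisor of N is abundant. -/
/-- The sum of all positive divisors of `n`. -/
def sigma (n : ℕ) : ℕ := ∑ d ∈ n.divisors, d

/-- `n` is abundant if `σ(n) > 2n`. -/
def Abundant (n : ℕ) : Prop := sigma n > 2 * n

/-- `n` is pseudoperfect if some subset of its proper divisors sums to `n`. -/
def Pseudoperfect (n : ℕ) : Prop := ∃ s ⊆ n.properDivisors, ∑ d ∈ s, d = n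

/-- `n` is weird if it is abundant and not pseudoperfect. -/
def Weird (n : ℕ) : Prop := Abundant n ∧ ¬ Pseudoperfect n

lemma abundant_pos {n : ℕ} (h : Abundant n) : 0 < n := by
  rcases Nat.eq_zero_or_pos n with h0 | h1
  · subst h0
    simp [Abundant, sigma] at h
  · exact h1

/-- A multiple of a pseudoperfect number is pseudoperfect. -/
lemma pseudoperfect_mul {d m : ℕ} (hm : 0 < m) (h : Pseudoperfect d) :
    Pseudoperfect (d * m) := by
  obtain ⟨s, hs, hsum⟩ := h
  refine ⟨s.image (· * m), ?_, ?_⟩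
  · intro x hx
    simp only [Finset.mem_image] at hx
    obtain ⟨e, he, rfl⟩ := hx
    have he' := hs he
    rw [Nat.mem_properDivisors] at he' ⊢
    exact ⟨Nat.mul_dvd_mul_right he'.1 m, (Nat.mul_lt_mul_right hm).mpr he'.2⟩
  · rw [Finset.sum_image (fun a _ b _ hab => Nat.eq_of_mul_eq_mul_right hm hab),
      ← Finset.sum_mul, hsum]

/-- The smallest odd weird number is a primitive abundant number. -/
theorem smallest_odd_weird_is_primitive_abundant (N : ℕ)
    (hodd : Odd N) (hw : Weird N)
    (hmin : ∀ m : ℕ, 0 < m → Odd m → m < N → ¬ Weird m) :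
    Abundant N ∧ ∀ d : ℕ, d ∣ N → d ≠ N → ¬ Abundant d := by
  refine ⟨hw.1, fun d hdvd hne habd => ?_⟩
  have hd : 0 < d := abundant_pos habd
  have hN : 0 < N := abundant_pos hw.1
  have hdN : d < N := lt_of_le_of_ne (Nat.le_of_dvd hN hdvd) hne
  have hdodd : Odd d := by
    rw [Nat.odd_iff, ← Nat.not_even_iff] at *
    exact fun h => hodd ((even_iff_two_dvd.mpr ((even_iff_two_dvd.mp h).trans hdvd)))
  have hnw := hmin d hd hdodd hdN
  have hpp : Pseudoperfect d := by
    by_contra hp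
    exact hnw ⟨habd, hp⟩
  obtain ⟨m, hm⟩ := hdvd
  have hm0 : 0 < m := by
    rcases Nat.eq_zero_or_pos m with h0 | h1
    · subst h0; simp at hm; omega
    · exact h1
  exact hw.2 (hm ▸ pseudoperfect_mul hm0 hpp)
end

section
/- Let M and N be positive integers with 1 < N < M, let p* be the largest prime factor of N, and let k* be the largest nonnegative integer such that N·p*^{k*} < M. Suppose σ(N)·p*^{k*} < 2·N·(p*−1)^{k*}. Then every positive integer N' < M of the form N' = N·q₁·q₂⋯q_k, where k ≥ 0 and each qᵢ is a prime with qᵢ ≥ p* (repetitions among the qᵢ allowed), is deficient, i.e., σ(N') < 2N'. -/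
/-- The largest prime factor of `n` (0 if `n` has no prime factor). -/
def maxPrimeFac (n : ℕ) : ℕ := n.primeFactors.sup id

lemma sigma_mul_le (m n : ℕ) : sigma (m * n) ≤ sigma m * sigma n := by
  rw [sigma, Nat.divisors_mul, Finset.mul_def]
  calc _ ≤ ∑ x ∈ m.divisors ×ˢ n.divisors, x.1 * x.2 :=
        Finset.sum_image_le_of_nonneg fun _ _ ↦ Nat.zero_le _
    _ = sigma m * sigma n := by rw [sigma, sigma, Finset.sum_mul_sum, Finset.sum_product]

lemma sigma_prime {q : ℕ} (hq : q.Prime) : sigma q = q + 1 := by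
  rw [sigma, hq.divisors, Finset.sum_pair hq.one_lt.ne, add_comm]

lemma succ_mul_sub_one_le_mul {p q : ℕ} (hpq : p ≤ q) : (q + 1) * (p - 1) ≤ p * q := by
  rcases p with _ | p
  · simp
  · simp only [Nat.add_sub_cancel]
    nlinarith

lemma sigma_mul_prime_mul_sub_one_le (n : ℕ) {p q : ℕ} (hq : q.Prime) (hpq : p ≤ q) :
    sigma (n * q) * (p - 1) ≤ sigma n * (p * q) :=
  calc sigma (n * q) * (p - 1) ≤ sigma n * (q + 1) * (p - 1) := by
        gcongr
        exact (sigma_mul_le n q).trans_eq (by rw [sigma_prime hq])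
    _ = sigma n * ((q + 1) * (p - 1)) := by ring
    _ ≤ sigma n * (p * q) := Nat.mul_le_mul_left _ (succ_mul_sub_one_le_mul hpq)

lemma sigma_mul_prod_mul_sub_one_pow_le (N p : ℕ) (L : List ℕ) (hL : ∀ q ∈ L, q.Prime ∧ p ≤ q)
    {k : ℕ} (hk : L.length ≤ k) :
    sigma (N * L.prod) * (p - 1) ^ k ≤ sigma N * p ^ k * L.prod := by
  induction L generalizing k with
  | nil =>
    simp only [List.prod_nil, mul_one]
    gcongr
    omega
  | cons q T ih =>
    obtain ⟨hq, hpq⟩ := hL q List.mem_cons_self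
    obtain ⟨k, rfl⟩ : ∃ j, k = j + 1 := ⟨k - 1, by simp at hk; omega⟩
    have hT := ih (fun r hr ↦ hL r (List.mem_cons_of_mem q hr)) (by simpa using hk)
    calc sigma (N * (q :: T).prod) * (p - 1) ^ (k + 1)
        = sigma (N * T.prod * q) * (p - 1) * (p - 1) ^ k := by
          rw [List.prod_cons, show N * (q * T.prod) = N * T.prod * q by ring]; ring
      _ ≤ sigma (N * T.prod) * (p * q) * (p - 1) ^ k :=
          Nat.mul_le_mul_right _ (sigma_mul_prime_mul_sub_one_le _ hq hpq)
      _ = sigma (N * T.prod) * (p - 1) ^ k * (p * q) := by ring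
      _ ≤ sigma N * p ^ k * T.prod * (p * q) := by gcongr
      _ = sigma N * p ^ (k + 1) * (q :: T).prod := by simp only [List.prod_cons]; ring

theorem barrier_prunes_general (M N : ℕ)
    (p : ℕ)
    (k : ℕ) (hkmax : ∀ j : ℕ, N * p ^ j < M → j ≤ k)
    (hbar : sigma N * p ^ k < 2 * N * (p - 1) ^ k) :
    ∀ L : List ℕ, (∀ q ∈ L, q.Prime ∧ p ≤ q) → N * L.prod < M →
      sigma (N * L.prod) < 2 * (N * L.prod) := by
  intro L hL hLM
  have hlen : L.length ≤ k := hkmax _ <| lt_of_le_of_lt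
    (Nat.mul_le_mul_left N (L.pow_card_le_prod p fun q hq ↦ (hL q hq).2)) hLM
  have hprod : 0 < L.prod := List.prod_pos fun q hq ↦ (hL q hq).1.pos
  refine Nat.lt_of_mul_lt_mul_right (a := (p - 1) ^ k) ?_
  calc sigma (N * L.prod) * (p - 1) ^ k ≤ sigma N * p ^ k * L.prod :=
        sigma_mul_prod_mul_sub_one_pow_le N p L hL hlen
    _ < 2 * N * (p - 1) ^ k * L.prod := Nat.mul_lt_mul_of_pos_right hbar hprod
    _ = 2 * (N * L.prod) * (p - 1) ^ k := by ring

/-- Pruning criterion: if `σ(N) * p*^k* < 2 * N * (p* - 1)^k*`, where `p*` is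
the largest prime factor of `N` and `k*` is the largest integer with
`N * p*^k* < M`, then every `N' < M` obtained from `N` by multiplying primes
`≥ p*` is deficient. -/
theorem barrier_prunes (M N : ℕ) (hN : 1 < N) (hNM : N < M)
    (p : ℕ) (hp : p = maxPrimeFac N)
    (k : ℕ) (hk : N * p ^ k < M) (hkmax : ∀ j : ℕ, N * p ^ j < M → j ≤ k)
    (hbar : sigma N * p ^ k < 2 * N * (p - 1) ^ k) :
    ∀ L : List ℕ, (∀ q ∈ L, q.Prime ∧ p ≤ q) → N * L.prod < M →
      sigma (N * L.prod) < 2 * (N * L.prod) :=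
  barrier_prunes_general M N p k hkmax hbar
end

section
/- If N is a weird number and p is a prime with p > σ(N), then p·N is weird. -/
/-- If `N` is weird and `p` is a prime with `p > σ(N)`, then `p * N` is weird. -/
theorem weird_mul_large_prime (N p : ℕ) (hN : Weird N) (hp : p.Prime)
    (hgt : p > sigma N) : Weird (p * N) := by
  obtain ⟨hab, hps⟩ := hN
  have hN0 : N ≠ 0 := by
    rintro rfl
    simp [Abundant, sigma] at hab
  have hpN0 : p * N ≠ 0 := mul_ne_zero hp.pos.ne' hN0
  constructor
  · -- Abundant
    have hinj : Set.InjOn (fun d => p * d) N.divisors := fun a _ b _ h =>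
      Nat.eq_of_mul_eq_mul_left hp.pos h
    have hsub : N.divisors.image (fun d => p * d) ⊆ (p * N).divisors := by
      intro x hx
      simp only [Finset.mem_image] at hx
      obtain ⟨d, hd, rfl⟩ := hx
      exact Nat.mem_divisors.mpr ⟨mul_dvd_mul_left p (Nat.mem_divisors.mp hd).1, hpN0⟩
    have h1 : p * sigma N = ∑ x ∈ N.divisors.image (fun d => p * d), x := by
      rw [Finset.sum_image hinj, sigma, Finset.mul_sum]
    have h2 : p * sigma N ≤ sigma (p * N) := by
      rw [h1]
      exact Finset.sum_le_sum_of_subset hsub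
    have h3 : 2 * (p * N) < p * sigma N := by
      calc 2 * (p * N) = p * (2 * N) := by ring
        _ < p * sigma N := (Nat.mul_lt_mul_left hp.pos).mpr hab
    exact lt_of_lt_of_le h3 h2
  · -- not Pseudoperfect
    rintro ⟨s, hs, hsum⟩
    set A := s.filter (fun x => ¬ p ∣ x) with hA
    set B := s.filter (fun x => p ∣ x) with hB
    have hsplit : ∑ d ∈ B, d + ∑ d ∈ A, d = p * N := by
      rw [hA, hB, Finset.sum_filter_add_sum_filter_not, hsum]
    -- A consists of divisors of N
    have hAsub : A ⊆ N.divisors := by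
      intro a ha
      rw [hA, Finset.mem_filter] at ha
      obtain ⟨has, hand⟩ := ha
      have hdvd : a ∣ p * N := (Nat.mem_properDivisors.mp (hs has)).1
      have hcop : a.Coprime p := ((Nat.Prime.coprime_iff_not_dvd hp).mpr hand).symm
      exact Nat.mem_divisors.mpr ⟨hcop.dvd_of_dvd_mul_left hdvd, hN0⟩
    have hAle : ∑ d ∈ A, d ≤ sigma N := Finset.sum_le_sum_of_subset hAsub
    have hpB : p ∣ ∑ d ∈ B, d := Finset.dvd_sum fun b hb => (Finset.mem_filter.mp hb).2
    have hpA : p ∣ ∑ d ∈ A, d := by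
      have : p ∣ ∑ d ∈ B, d + ∑ d ∈ A, d := hsplit ▸ Dvd.intro N rfl
      exact (Nat.dvd_add_right hpB).mp this
    have hA0 : ∑ d ∈ A, d = 0 := Nat.eq_zero_of_dvd_of_lt hpA (lt_of_le_of_lt hAle hgt)
    have hBsum : ∑ d ∈ B, d = p * N := by omega
    -- divide B by p
    have hinjB : Set.InjOn (fun x => x / p) B := by
      intro a ha b hb h
      obtain ⟨x, rfl⟩ := (Finset.mem_filter.mp ha).2
      obtain ⟨y, rfl⟩ := (Finset.mem_filter.mp hb).2
      simp only [Nat.mul_div_cancel_left _ hp.pos] at h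
      rw [h]
    set B' := B.image (fun x => x / p) with hB'
    have hB'sub : B' ⊆ N.properDivisors := by
      intro c hc
      rw [hB', Finset.mem_image] at hc
      obtain ⟨b, hb, rfl⟩ := hc
      obtain ⟨hbs, hpb⟩ := Finset.mem_filter.mp hb
      obtain ⟨hbdvd, hblt⟩ := Nat.mem_properDivisors.mp (hs hbs)
      obtain ⟨c, rfl⟩ := hpb
      rw [Nat.mul_div_cancel_left c hp.pos]
      have hcd : c ∣ N := (mul_dvd_mul_iff_left hp.pos.ne').mp hbdvd
      have hclt : c < N := Nat.lt_of_mul_lt_mul_left hblt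
      exact Nat.mem_properDivisors.mpr ⟨hcd, hclt⟩
    have hB'sum : ∑ d ∈ B', d = N := by
      have h1 : ∑ d ∈ B', d = ∑ b ∈ B, b / p := Finset.sum_image hinjB
      have h2 : p * ∑ b ∈ B, b / p = ∑ b ∈ B, b := by
        rw [Finset.mul_sum]
        apply Finset.sum_congr rfl
        intro b hb
        exact Nat.mul_div_cancel' (Finset.mem_filter.mp hb).2
      have hp1 : 1 ≤ p := hp.pos
      rw [h1]
      have : p * (∑ b ∈ B, b / p) = p * N := by rw [h2, hBsum]
      exact Nat.eq_of_mul_eq_mul_left hp.pos this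
    exact hps ⟨B', hB'sub, hB'sum⟩
end
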